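/- Let y, D : [t₀, t₀+T*] → ℝ≥0 with y differentiable, y(t₀) ≤ N, and y'(t) + D(t) ≤ C₀ y(t)² + 2ρ_m y(t), where T* = min(N^{-1}, ρ_m^{-1})/(8(1+C₀)). Then ∫_{t₀}^{t₀+T*} D(t) dt ≤ 2N. -/

import Mathlib

open Real MeasureTheory intervalIntegral

noncomputable section

/-- Points of the plane; the channel is periodic in the first coordinate. -/
abbrev Pt : Type := ℝ × ℝ

/-- The periodic channel Ω = 𝕋 × [0,π], with the torus realized as a fundamental domain. -/
def Omega : Set Pt := Set.Ioo (-Real.pi) Real.pi ×ˢ Set.Icc 0 Real.pi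

/-- The boundary ∂Ω = 𝕋 × {0,π}. -/
def onBdry (x : Pt) : Prop := x.2 = 0 ∨ x.2 = Real.pi

/-- Periodicity in the horizontal variable with period 2π. -/
def periodicX (f : Pt → ℝ) : Prop := ∀ x : Pt, f (x.1 + 2 * Real.pi, x.2) = f x

/-- First partial derivative ∂₁. -/
def pd1 (f : Pt → ℝ) (x : Pt) : ℝ := fderiv ℝ f x (1, 0)

/-- Second partial derivative ∂₂. -/
def pd2 (f : Pt → ℝ) (x : Pt) : ℝ := fderiv ℝ f x (0, 1)

/-- Laplacian. -/
def lap (f : Pt → ℝ) (x : Pt) : ℝ := pd1 (pd1 f) x + pd2 (pd2 f) x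

/-- Squared length of the gradient. -/
def gradSq (f : Pt → ℝ) (x : Pt) : ℝ := (pd1 f x) ^ 2 + (pd2 f x) ^ 2

/-! As long as `0 ≤ y < 2N`, the right-hand side `C₀ y² + 2 ρ_m y` stays below
`M = 4 C₀ N² + 4 ρ_m N`, and the choice of `T*` makes `M T* ≤ N / 2`. A barrier argument
therefore keeps `y` under the line `N + M (t - t₀) ≤ 3N/2`, so the a priori bound never
breaks down, and integrating `y' + D ≤ M` gives `∫ D ≤ y(t₀) + M T* ≤ 2N`. -/

open Set

/-- Holds even when `D` is not integrable, since then the integral is `0` and the bound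
reduces to the mean value inequality `y b - y a ≤ M (b - a)`. -/
theorem integral_le_sub_add_mul_of_deriv_add_le {y y' D : ℝ → ℝ} {a b M : ℝ} (hab : a ≤ b)
    (hcont : ContinuousOn y (Icc a b)) (hderiv : ∀ t ∈ Ioo a b, HasDerivAt y (y' t) t)
    (hD : ∀ t ∈ Ioo a b, 0 ≤ D t) (hle : ∀ t ∈ Ioo a b, y' t + D t ≤ M) :
    ∫ t in a..b, D t ≤ y a - y b + M * (b - a) := by
  have hderiv' : ∀ t ∈ Ioo a b, HasDerivWithinAt y (y' t) (Ioi t) t :=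
    fun t ht => (hderiv t ht).hasDerivWithinAt
  by_cases hDint : IntervalIntegrable D volume a b
  · have hFTC : y b - y a ≤ ∫ t in a..b, (M - D t) :=
      sub_le_integral_of_hasDeriv_right_of_le hab hcont hderiv'
        (Integrable.sub (integrableOn_const measure_Icc_lt_top.ne)
          ((integrableOn_Icc_iff_integrableOn_Ioc).2 hDint.1))
        fun t ht => by linarith [hle t ht]
    rw [intervalIntegral.integral_sub intervalIntegrable_const hDint,
      intervalIntegral.integral_const, smul_eq_mul] at hFTC
    linarith
  · have hMVT : y b - y a ≤ ∫ _ in a..b, M :=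
      sub_le_integral_of_hasDeriv_right_of_le hab hcont hderiv'
        (integrableOn_const measure_Icc_lt_top.ne)
        fun t ht => by linarith [hle t ht, hD t ht]
    rw [intervalIntegral.integral_const, smul_eq_mul] at hMVT
    rw [intervalIntegral.integral_undef hDint]
    linarith

theorem quadratic_lt_of_lt_two_mul {C₀ ρm N y : ℝ} (hC : 0 ≤ C₀) (hρm : 0 < ρm) (hy0 : 0 ≤ y)
    (hy : y < 2 * N) : C₀ * y ^ 2 + 2 * ρm * y < 4 * C₀ * N ^ 2 + 4 * ρm * N := by
  nlinarith [mul_le_mul_of_nonneg_left (mul_self_le_mul_self hy0 hy.le) hC]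

theorem mul_min_inv_div_le_half {C₀ ρm N : ℝ} (hC : 0 ≤ C₀) (hρm : 0 < ρm) (hN : 0 < N) :
    (4 * C₀ * N ^ 2 + 4 * ρm * N) * (min N⁻¹ ρm⁻¹ / (8 * (1 + C₀))) ≤ N / 2 := by
  set m := min N⁻¹ ρm⁻¹
  have hNm : N * m ≤ 1 :=
    (mul_le_mul_of_nonneg_left (min_le_left _ _) hN.le).trans_eq (mul_inv_cancel₀ hN.ne')
  have hρmm : ρm * m ≤ 1 :=
    (mul_le_mul_of_nonneg_left (min_le_right _ _) hρm.le).trans_eq (mul_inv_cancel₀ hρm.ne')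
  rw [mul_div_assoc', div_le_iff₀ (by positivity)]
  nlinarith [mul_le_mul_of_nonneg_left hNm (by positivity : 0 ≤ 4 * C₀ * N),
    mul_le_mul_of_nonneg_left hρmm (by positivity : 0 ≤ 4 * N)]

theorem le_add_mul_sub_of_deriv_add_le_quadratic {y y' D : ℝ → ℝ} {a b N ρm C₀ : ℝ}
    (hN : 0 < N) (hρm : 0 < ρm) (hC : 0 ≤ C₀)
    (hlen : (4 * C₀ * N ^ 2 + 4 * ρm * N) * (b - a) ≤ N / 2)
    (hcont : ContinuousOn y (Icc a b)) (hderiv : ∀ t ∈ Ico a b, HasDerivAt y (y' t) t)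
    (hD : ∀ t ∈ Ico a b, 0 ≤ D t)
    (hineq : ∀ t ∈ Ico a b, y' t + D t ≤ C₀ * y t ^ 2 + 2 * ρm * y t) (h0 : y a ≤ N) :
    ∀ t ∈ Icc a b, y t ≤ N + (4 * C₀ * N ^ 2 + 4 * ρm * N) * (t - a) := by
  set M := 4 * C₀ * N ^ 2 + 4 * ρm * N
  have hM : 0 ≤ M := by positivity
  refine image_le_of_deriv_right_lt_deriv_boundary hcont
    (fun t ht => (hderiv t ht).hasDerivWithinAt) (by simpa using h0)
    (fun t => ((hasDerivAt_id t).sub_const a |>.const_mul M |>.const_add N).congr_deriv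
      (mul_one M)) ?_
  intro t ht hyt
  have hta : M * (t - a) ≤ N / 2 :=
    (mul_le_mul_of_nonneg_left (by linarith [ht.2]) hM).trans hlen
  have hy0 : 0 ≤ y t := by nlinarith [ht.1]
  have hrhs : C₀ * y t ^ 2 + 2 * ρm * y t < M :=
    quadratic_lt_of_lt_two_mul hC hρm hy0 (by linarith)
  linarith [hineq t ht, hD t ht]

/-- Time-integrated dissipation bound: integrating y' + D ≤ C₀ y² + 2 ρ_m y over an
interval of length T* = min(N⁻¹, ρ_m⁻¹)/(8(1+C₀)) with y(t₀) ≤ N yields ∫ D ≤ 2N. -/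
theorem stmt7 (N ρm C₀ t₀ Tstar : ℝ) (hN : 0 < N) (hρm : 0 < ρm) (hC : 0 < C₀)
    (hT : Tstar = min N⁻¹ ρm⁻¹ / (8 * (1 + C₀)))
    (y y' D : ℝ → ℝ)
    (hpos : ∀ t ∈ Set.Icc t₀ (t₀ + Tstar), 0 ≤ y t)
    (hDpos : ∀ t ∈ Set.Icc t₀ (t₀ + Tstar), 0 ≤ D t)
    (hderiv : ∀ t ∈ Set.Icc t₀ (t₀ + Tstar), HasDerivAt y (y' t) t)
    (hineq : ∀ t ∈ Set.Icc t₀ (t₀ + Tstar), y' t + D t ≤ C₀ * (y t) ^ 2 + 2 * ρm * y t)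
    (h0 : y t₀ ≤ N) :
    (∫ t in t₀..(t₀ + Tstar), D t) ≤ 2 * N := by
  set M := 4 * C₀ * N ^ 2 + 4 * ρm * N
  have hab : t₀ ≤ t₀ + Tstar := le_add_of_nonneg_right (by rw [hT]; positivity)
  have hlen : M * (t₀ + Tstar - t₀) ≤ N / 2 := by
    rw [add_sub_cancel_left, hT]
    exact mul_min_inv_div_le_half hC.le hρm hN
  have hcont : ContinuousOn y (Icc t₀ (t₀ + Tstar)) :=
    fun t ht => (hderiv t ht).continuousAt.continuousWithinAt
  have hbarrier := le_add_mul_sub_of_deriv_add_le_quadratic hN hρm hC.le hlen hcont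
    (fun t ht => hderiv t (Ico_subset_Icc_self ht)) (fun t ht => hDpos t (Ico_subset_Icc_self ht))
    (fun t ht => hineq t (Ico_subset_Icc_self ht)) h0
  have hbelow : ∀ t ∈ Icc t₀ (t₀ + Tstar), y t < 2 * N := fun t ht => by
    have : M * (t - t₀) ≤ M * (t₀ + Tstar - t₀) :=
      mul_le_mul_of_nonneg_left (by linarith [ht.2]) (by positivity)
    linarith [hbarrier t ht]
  have hdiss : ∫ t in t₀..(t₀ + Tstar), D t ≤ y t₀ - y (t₀ + Tstar) + M * (t₀ + Tstar - t₀) :=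
    integral_le_sub_add_mul_of_deriv_add_le hab hcont
      (fun t ht => hderiv t (Ioo_subset_Icc_self ht))
      (fun t ht => hDpos t (Ioo_subset_Icc_self ht)) fun t ht => by
        have ht' := Ioo_subset_Icc_self ht
        linarith [hineq t ht', quadratic_lt_of_lt_two_mul hC.le hρm (hpos t ht') (hbelow t ht')]
  linarith [hpos _ (right_mem_Icc.2 hab)]
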